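/- Let (X_n) be a transient Markov chain on a countable state space with Green's function g, K a nonempty finite set, and e_K its equilibrium measure. Then for every starting point x, P_x[H_K < ∞] = ∑_{y ∈ K} g(x,y)·e_K(y), where H_K is the first hitting time of K. -/

import Mathlib

open MeasureTheory
open scoped ENNReal

/-- A (time-homogeneous) Markov chain on a countable state space `S`, encoded by the family
of path-space laws `Pr x` of the chain started at `x`, together with the Markov property
expressed on cylinder events. -/
structure MarkovChain (S : Type*) [MeasurableSpace S] where
  Pr : S → Measure (ℕ → S)
  isProb : ∀ x, IsProbabilityMeasure (Pr x)
  start : ∀ x, Pr x {ω | ω 0 = x} = 1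
  markov : ∀ (x : S) (n : ℕ) (pre : Fin (n + 1) → S) (B : Set (ℕ → S)), MeasurableSet B →
    Pr x ({ω | ∀ i : Fin (n + 1), ω i.val = pre i} ∩ {ω | (fun k => ω (n + k)) ∈ B})
      = Pr x {ω | ∀ i : Fin (n + 1), ω i.val = pre i} * Pr (pre (Fin.last n)) B

namespace MarkovChain

variable {S : Type*} [MeasurableSpace S]

/-- Green's function: expected number of visits to `y` starting from `x`. -/
noncomputable def green (M : MarkovChain S) (x y : S) : ℝ≥0∞ :=
  ∑' n : ℕ, M.Pr x {ω | ω n = y}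

/-- Transience: the Green's function is finite everywhere. -/
def Transient (M : MarkovChain S) : Prop := ∀ x y, M.green x y < ⊤

/-- Irreducibility: every state can be reached from every state. -/
def Irreducible (M : MarkovChain S) : Prop := ∀ x y, ∃ n : ℕ, 0 < M.Pr x {ω | ω n = y}

open scoped Classical in
/-- Equilibrium measure of a finite set `K`:
`e_K(y) = P_y[no return to K at positive times] · 1{y ∈ K}`. -/
noncomputable def equil (M : MarkovChain S) (K : Finset S) (y : S) : ℝ :=
  if y ∈ K then (M.Pr y {ω | ∀ n : ℕ, 1 ≤ n → ω n ∉ (K : Set S)}).toReal else 0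

end MarkovChain

/-!
Transience makes `∑ₙ P_x[Xₙ ∈ K] = ∑_{y ∈ K} g(x,y)` finite, so by Borel–Cantelli almost every
path visits `K` only finitely often. A path that hits `K` therefore has a last visit, at some
time `n` and place `y ∈ K`, and the events "last visit at `(n, y)`" are disjoint. By the Markov
property at time `n`, the event `{Xₙ = y, no return to K after n}` has probability
`P_x[Xₙ = y] · e_K(y)`; summing over `n` turns `P_x[Xₙ = y]` into `g(x,y)`.
-/

open Function

namespace MarkovChain

section Paths

variable {S : Type*}

def noReturn (K : Finset S) : Set (ℕ → S) := {ω | ∀ n : ℕ, 1 ≤ n → ω n ∉ (K : Set S)}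

/-- For `y ∈ K`: the paths whose last visit to `K` is at time `n`, in state `y`. -/
def lastExit (K : Finset S) (n : ℕ) (y : S) : Set (ℕ → S) :=
  {ω | ω n = y} ∩ {ω | (fun k => ω (n + k)) ∈ noReturn K}

lemma exists_lastExit {K : Finset S} {ω : ℕ → S} {N : ℕ} (hN : ∀ n ≥ N, ω n ∉ (K : Set S))
    {n₀ : ℕ} (hn₀ : ω n₀ ∈ (K : Set S)) : ∃ n, ω n ∈ (K : Set S) ∧ ω ∈ lastExit K n (ω n) := by
  classical
  have hn₀N : n₀ ≤ N := by
    by_contra h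
    exact hN n₀ (by omega) hn₀
  set n := Nat.findGreatest (ω · ∈ (K : Set S)) N
  refine ⟨n, Nat.findGreatest_spec (P := (ω · ∈ (K : Set S))) hn₀N hn₀, rfl, fun m hm hmem => ?_⟩
  have hle : n + m ≤ N := by
    by_contra h
    exact hN (n + m) (by omega) hmem
  have := Nat.le_findGreatest (P := (ω · ∈ (K : Set S))) hle hmem
  omega

lemma apply_notMem_of_mem_lastExit {K : Finset S} {n : ℕ} {y : S} {ω : ℕ → S}
    (hω : ω ∈ lastExit K n y) {m : ℕ} (hnm : n < m) : ω m ∉ (K : Set S) := by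
  have : ω (n + (m - n)) ∉ (K : Set S) := hω.2 (m - n) (by omega)
  rwa [Nat.add_sub_cancel' hnm.le] at this

lemma pairwise_disjoint_lastExit (K : Finset S) :
    Pairwise (Disjoint on (fun p : K × ℕ => lastExit K p.2 p.1)) := by
  rintro ⟨y, n⟩ ⟨z, m⟩ hne
  refine Set.disjoint_left.2 fun ω (hy : ω ∈ lastExit K n y) (hz : ω ∈ lastExit K m z) => ?_
  rcases lt_trichotomy n m with hnm | rfl | hmn
  · exact apply_notMem_of_mem_lastExit hy hnm (hz.1 ▸ z.2)
  · exact hne (by rw [Subtype.ext (hy.1.symm.trans hz.1)])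
  · exact apply_notMem_of_mem_lastExit hz hmn (hy.1 ▸ y.2)

lemma setOf_apply_eq_eq_iUnion_cylinder (n : ℕ) (y : S) :
    {ω : ℕ → S | ω n = y} = ⋃ p : {p : Fin (n + 1) → S // p (Fin.last n) = y},
      {ω : ℕ → S | ∀ i : Fin (n + 1), ω i.val = p.1 i} := by
  ext ω
  refine ⟨fun h => Set.mem_iUnion.2 ⟨⟨fun i => ω i.val, h⟩, fun _ => rfl⟩, fun h => ?_⟩
  obtain ⟨p, hp⟩ := Set.mem_iUnion.1 h
  exact (hp (Fin.last n)).trans p.2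

lemma pairwise_disjoint_cylinder (n : ℕ) :
    Pairwise (Disjoint on (fun p : Fin (n + 1) → S =>
      {ω : ℕ → S | ∀ i : Fin (n + 1), ω i.val = p i})) :=
  fun _ _ hpq => Set.disjoint_left.2 fun _ hp hq => hpq (funext fun i => (hp i).symm.trans (hq i))

end Paths

variable {S : Type*} [MeasurableSpace S]

instance instIsProbabilityMeasurePr (M : MarkovChain S) (x : S) :
    IsProbabilityMeasure (M.Pr x) :=
  M.isProb x

lemma measurable_shift (n : ℕ) : Measurable fun (ω : ℕ → S) (k : ℕ) => ω (n + k) :=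
  measurable_pi_lambda _ fun k => measurable_pi_apply (n + k)

lemma tsum_measure_mem_le_sum_green (M : MarkovChain S) (x : S) (K : Finset S) :
    ∑' n : ℕ, M.Pr x {ω | ω n ∈ (K : Set S)} ≤ ∑ y ∈ K, M.green x y := by
  calc ∑' n : ℕ, M.Pr x {ω | ω n ∈ (K : Set S)}
      ≤ ∑' n : ℕ, ∑ y ∈ K, M.Pr x {ω | ω n = y} := by
        refine ENNReal.tsum_le_tsum fun n => le_trans (measure_mono ?_)
          (measure_biUnion_finset_le K fun y => {ω : ℕ → S | ω n = y})
        intro ω hω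
        simpa using hω
    _ = ∑ y ∈ K, M.green x y :=
        Summable.tsum_finsetSum fun _ _ => ENNReal.summable

lemma Transient.ae_eventually_notMem {M : MarkovChain S} (htr : M.Transient) (x : S)
    (K : Finset S) : ∀ᵐ ω ∂M.Pr x, ∀ᶠ n in Filter.atTop, ω n ∉ (K : Set S) :=
  MeasureTheory.ae_eventually_notMem <| ne_top_of_le_ne_top
    (ENNReal.sum_lt_top.2 fun y _ => htr x y).ne (tsum_measure_mem_le_sum_green M x K)

lemma ae_eq_iUnion_lastExit {M : MarkovChain S} (htr : M.Transient) (x : S) (K : Finset S) :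
    {ω | ∃ n : ℕ, ω n ∈ (K : Set S)} =ᵐ[M.Pr x] ⋃ p : K × ℕ, lastExit K p.2 p.1 := by
  filter_upwards [htr.ae_eventually_notMem x K] with ω hω
  obtain ⟨N, hN⟩ := Filter.eventually_atTop.1 hω
  refine propext ⟨fun ⟨n₀, hn₀⟩ => ?_, fun hmem => ?_⟩
  · obtain ⟨n, hnK, hn⟩ := exists_lastExit hN hn₀
    exact Set.mem_iUnion.2 ⟨(⟨ω n, hnK⟩, n), hn⟩
  · obtain ⟨⟨y, n⟩, hy⟩ := Set.mem_iUnion.1 hmem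
    exact ⟨n, hy.1 ▸ y.2⟩

variable [MeasurableSingletonClass S]

lemma measurableSet_noReturn (K : Finset S) : MeasurableSet (noReturn K) := by
  simp only [noReturn, Set.ofPred_forall]
  exact .iInter fun n => .iInter fun _ =>
    (K.finite_toSet.measurableSet.preimage (measurable_pi_apply n)).compl

lemma measurableSet_lastExit (K : Finset S) (n : ℕ) (y : S) :
    MeasurableSet (lastExit K n y) :=
  ((measurableSet_singleton y).preimage (measurable_pi_apply n)).inter
    (measurable_shift n (measurableSet_noReturn K))

variable [Countable S]

/-- The Markov property at a fixed time `n`, conditioning only on the present state. -/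
lemma measure_apply_eq_inter_shift (M : MarkovChain S) (x y : S) (n : ℕ) {B : Set (ℕ → S)}
    (hB : MeasurableSet B) :
    M.Pr x ({ω | ω n = y} ∩ {ω | (fun k => ω (n + k)) ∈ B})
      = M.Pr x {ω | ω n = y} * M.Pr y B := by
  have hdisj : Pairwise (Disjoint on fun p : {p : Fin (n + 1) → S // p (Fin.last n) = y} =>
      {ω : ℕ → S | ∀ i : Fin (n + 1), ω i.val = p.1 i}) :=
    fun p q hpq => pairwise_disjoint_cylinder n fun h => hpq (Subtype.ext h)
  have hmeas (p : Fin (n + 1) → S) :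
      MeasurableSet {ω : ℕ → S | ∀ i : Fin (n + 1), ω i.val = p i} := by
    simp only [Set.ofPred_forall]
    exact .iInter fun i => (measurableSet_singleton _).preimage (measurable_pi_apply _)
  have hshift : MeasurableSet {ω : ℕ → S | (fun k => ω (n + k)) ∈ B} := measurable_shift n hB
  rw [setOf_apply_eq_eq_iUnion_cylinder n y, Set.iUnion_inter,
    measure_iUnion (fun _ _ hpq => (hdisj hpq).mono Set.inter_subset_left
      Set.inter_subset_left) fun p => (hmeas p.1).inter hshift,
    measure_iUnion hdisj fun p => hmeas p.1, ← ENNReal.tsum_mul_right]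
  refine tsum_congr fun p => ?_
  rw [M.markov x n p.1 B hB, p.2]

lemma measure_hitting_eq (M : MarkovChain S) (htr : M.Transient) (x : S) (K : Finset S) :
    M.Pr x {ω | ∃ n : ℕ, ω n ∈ (K : Set S)} = ∑ y ∈ K, M.green x y * M.Pr y (noReturn K) := by
  rw [measure_congr (ae_eq_iUnion_lastExit htr x K),
    measure_iUnion (pairwise_disjoint_lastExit K) fun p => measurableSet_lastExit K p.2 p.1,
    ENNReal.tsum_prod (f := fun (y : K) n => M.Pr x (lastExit K n y)), ← Finset.tsum_subtype]
  refine tsum_congr fun y => ?_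
  simp only [lastExit, measure_apply_eq_inter_shift M x _ _ (measurableSet_noReturn K),
    ENNReal.tsum_mul_right, green]

end MarkovChain

theorem stmt9_general {S : Type*} [MeasurableSpace S] [MeasurableSingletonClass S] [Countable S]
    (M : MarkovChain S) (htr : M.Transient)
    (K : Finset S) (x : S) :
    (M.Pr x {ω | ∃ n : ℕ, ω n ∈ (K : Set S)}).toReal
      = ∑ y ∈ K, (M.green x y).toReal * M.equil K y := by
  rw [M.measure_hitting_eq htr x K,
    ENNReal.toReal_sum fun y _ => ENNReal.mul_ne_top (htr x y).ne (measure_ne_top _ _)]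
  refine Finset.sum_congr rfl fun y hy => ?_
  rw [ENNReal.toReal_mul, MarkovChain.equil, if_pos hy, MarkovChain.noReturn]

/-- Last-exit decomposition: for a transient chain and a nonempty finite set `K`,
`P_x[H_K < ∞] = ∑_{y ∈ K} g(x,y) e_K(y)`. -/
theorem stmt9 {S : Type*} [MeasurableSpace S] [MeasurableSingletonClass S] [Countable S]
    (M : MarkovChain S) (htr : M.Transient)
    (K : Finset S) (hK : K.Nonempty) (x : S) :
    (M.Pr x {ω | ∃ n : ℕ, ω n ∈ (K : Set S)}).toReal
      = ∑ y ∈ K, (M.green x y).toReal * M.equil K y :=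
  stmt9_general M htr K x
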